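/- Monotonicity of vulnerability in shard count under the uniform model: if n' > n ≥ 2 and m ≥ 1, then the expected number of distinct shards involved in a transaction with m inputs is larger with n' shards than with n shards. -/

import Mathlib

/-! With `r = (n - 1) / n = 1 - 1/n` we have `n * (1 - r) = 1`, so `n * (1 - r ^ (m + 1))` is the
geometric sum `1 + r + ⋯ + r ^ m`. Since `r` increases strictly with `n` and stays nonnegative,
every term of this sum weakly increases and the term `r` strictly, as soon as `m ≥ 1`. -/

open Finset

theorem mul_one_sub_pow_eq_geom_sum {K : Type*} [Field K] {x : K} (hx : x ≠ 0) (k : ℕ) :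
    x * (1 - ((x - 1) / x) ^ k) = ∑ i ∈ range k, ((x - 1) / x) ^ i := by
  have hx_mul : x * (1 - (x - 1) / x) = 1 := by field_simp; ring
  rw [← geom_sum_mul_neg, mul_left_comm, hx_mul, mul_one]

theorem sub_one_div_self_strictMonoOn :
    StrictMonoOn (fun x : ℝ => (x - 1) / x) (Set.Ioi 0) := by
  intro x (hx : 0 < x) y (hy : 0 < y) hxy
  simp only [sub_div, div_self hx.ne', div_self hy.ne']
  exact sub_lt_sub_left (one_div_lt_one_div_of_lt hx hxy) 1

theorem geom_sum_lt_geom_sum {R : Type*} [Semiring R] [PartialOrder R] [IsStrictOrderedRing R]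
    {r s : R} (hr : 0 ≤ r) (hrs : r < s) {k : ℕ} (hk : 2 ≤ k) :
    ∑ i ∈ range k, r ^ i < ∑ i ∈ range k, s ^ i := by
  refine sum_lt_sum (fun i _ => pow_le_pow_left₀ hr hrs.le i) ⟨1, mem_range.mpr hk, ?_⟩
  simpa using hrs

/-- For fixed `m ≥ 1`, the expected number of distinct shards involved in a
transaction with `m` inputs under the uniform model,
`g(n) = n·(1 - ((n-1)/n)^(m+1))`, is strictly increasing in the shard count:
if `n' > n ≥ 2` then `g(n) < g(n')`. -/
theorem stmt_13 (m n n' : ℕ) (hm : 1 ≤ m) (hn : 2 ≤ n) (hnn' : n < n') :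
    (n : ℝ) * (1 - (((n : ℝ) - 1) / (n : ℝ)) ^ (m + 1))
      < (n' : ℝ) * (1 - (((n' : ℝ) - 1) / (n' : ℝ)) ^ (m + 1)) := by
  have hn_pos : (0 : ℝ) < n := by exact_mod_cast (by omega : 0 < n)
  have hn_lt : (n : ℝ) < n' := by exact_mod_cast hnn'
  have hr_nonneg : 0 ≤ ((n : ℝ) - 1) / n :=
    div_nonneg (sub_nonneg.mpr (by exact_mod_cast (by omega : 1 ≤ n))) hn_pos.le
  rw [mul_one_sub_pow_eq_geom_sum hn_pos.ne', mul_one_sub_pow_eq_geom_sum (hn_pos.trans hn_lt).ne']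
  exact geom_sum_lt_geom_sum hr_nonneg
    (sub_one_div_self_strictMonoOn hn_pos (hn_pos.trans hn_lt) hn_lt) (by omega)
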